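/- There exists an equivalence-equipped argumentation framework that has no simple complete extension. Concretely, take A = {1, 2, 3, 4, 5}, att = {(1,2), (2,3), (4,5)}, and ≈ the smallest equivalence relation with 3 ≈ 5; then no subset of A is a simple complete extension. -/

import Mathlib

namespace EEAF

variable {A : Type*}

/-- Equivalence closure of a set of arguments. -/
def cl (equiv : A → A → Prop) (S : Set A) : Set A := {u | ∃ v ∈ S, equiv u v}

/-- `S` is simple-conflict-free: no attacks among members of `S`. -/
def SimpleCF (att : A → A → Prop) (S : Set A) : Prop := ∀ u ∈ S, ∀ v ∈ S, ¬ att u v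

/-- `S` is wide-conflict-free: its equivalence closure is simple-conflict-free. -/
def WideCF (att equiv : A → A → Prop) (S : Set A) : Prop := SimpleCF att (cl equiv S)

/-- `S` simple-defends `u`. -/
def SimpleDef (att : A → A → Prop) (S : Set A) (u : A) : Prop :=
  ∀ v, att v u → ∃ w ∈ S, att w v

/-- `S` wide-defends `u`: it simple-defends every member of `cl {u}`. -/
def WideDef (att equiv : A → A → Prop) (S : Set A) (u : A) : Prop :=
  ∀ x ∈ cl equiv ({u} : Set A), SimpleDef att S x

/-- `S` is simple-admissible. -/
def SimpleAdm (att : A → A → Prop) (S : Set A) : Prop :=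
  SimpleCF att S ∧ ∀ u ∈ S, SimpleDef att S u

/-- `S` is wide-admissible. -/
def WideAdm (att equiv : A → A → Prop) (S : Set A) : Prop :=
  WideCF att equiv S ∧ ∀ u ∈ S, WideDef att equiv S u

/-- `S` is closed under equivalence. -/
def ClosedEquiv (equiv : A → A → Prop) (S : Set A) : Prop := S = cl equiv S

/-- `S` is closed under simple defence. -/
def ClosedSimpleDef (att : A → A → Prop) (S : Set A) : Prop :=
  ∀ u, SimpleDef att S u → u ∈ S

/-- Simple complete extension: simple-admissible and closed under both simple
defence and equivalence. -/
def SimpleComplete (att equiv : A → A → Prop) (S : Set A) : Prop :=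
  SimpleAdm att S ∧ ClosedSimpleDef att S ∧ ClosedEquiv equiv S

/-- The five arguments 1,…,5. -/
inductive Arg : Type
  | a1 | a2 | a3 | a4 | a5
deriving DecidableEq

instance : Fintype Arg where
  elems := {Arg.a1, Arg.a2, Arg.a3, Arg.a4, Arg.a5}
  complete := by intro x; cases x <;> simp

/-- The attack relation: 1 attacks 2, 2 attacks 3, 4 attacks 5. -/
def attEx : Arg → Arg → Prop := fun u v =>
  (u = Arg.a1 ∧ v = Arg.a2) ∨ (u = Arg.a2 ∧ v = Arg.a3) ∨ (u = Arg.a4 ∧ v = Arg.a5)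

/-- The smallest equivalence relation with 3 ≈ 5. -/
def equivEx : Arg → Arg → Prop := Relation.EqvGen (fun u v => u = Arg.a3 ∧ v = Arg.a5)

/-! Arguments 1 and 4 are unattacked, so a set closed under simple defence contains them, and then
also 3, which 1 defends against its only attacker 2. Closing under equivalence adds 5, which 4
attacks. -/

theorem ClosedSimpleDef.mem_of_unattacked {att : A → A → Prop} {S : Set A}
    (hS : ClosedSimpleDef att S) {u : A} (hu : ∀ v, ¬ att v u) : u ∈ S :=
  hS u fun v hv => (hu v hv).elim

theorem ClosedEquiv.mem_of_equiv {equiv : A → A → Prop} {S : Set A} (hS : ClosedEquiv equiv S)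
    {u v : A} (hv : v ∈ S) (huv : equiv u v) : u ∈ S :=
  hS ▸ ⟨v, hv, huv⟩

theorem not_attEx_a1 (v : Arg) : ¬ attEx v Arg.a1 := by simp [attEx]

theorem not_attEx_a4 (v : Arg) : ¬ attEx v Arg.a4 := by simp [attEx]

theorem attEx_a3_iff (v : Arg) : attEx v Arg.a3 ↔ v = Arg.a2 := by simp [attEx]

theorem equivEx_a5_a3 : equivEx Arg.a5 Arg.a3 :=
  .symm _ _ (.rel _ _ ⟨rfl, rfl⟩)

/-- There is an equivalence-equipped argumentation framework having no simple
complete extension. -/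
theorem no_simple_complete_extension_example :
    Equivalence equivEx ∧
    ∀ S : Set Arg, ¬ SimpleComplete attEx equivEx S := by
  refine ⟨Relation.EqvGen.is_equivalence _, ?_⟩
  rintro S ⟨⟨hcf, -⟩, hclD, hclE⟩
  have h1 : Arg.a1 ∈ S := hclD.mem_of_unattacked not_attEx_a1
  have h4 : Arg.a4 ∈ S := hclD.mem_of_unattacked not_attEx_a4
  have h3 : Arg.a3 ∈ S :=
    hclD _ fun v hv => ⟨Arg.a1, h1, Or.inl ⟨rfl, (attEx_a3_iff v).1 hv⟩⟩
  have h5 : Arg.a5 ∈ S := hclE.mem_of_equiv h3 equivEx_a5_a3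
  exact hcf _ h4 _ h5 (Or.inr (Or.inr ⟨rfl, rfl⟩))

end EEAF
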